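/- For every k ∈ {7, 16, 20, 22} and every m ≥ 2, the graph G on vertex set {1,…,m} whose edge set consists of all pairs {i,j} with 2 ≤ i < j ≤ m together with the single edge {1,2} is k-equivalent to the complete graph K_m, i.e., 𝔞_k^G = 𝔞_k^{K_m}. -/

import Mathlib

open Matrix DirectSum

attribute [local instance 100] LieRing.ofAssociativeRing

noncomputable section

/-- The identity Pauli matrix `I`. -/
def PauliI : Matrix (Fin 2) (Fin 2) ℂ := 1

/-- The Pauli matrix `X`. -/
def PauliX : Matrix (Fin 2) (Fin 2) ℂ := !![0, 1; 1, 0]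

/-- The Pauli matrix `Y`. -/
def PauliY : Matrix (Fin 2) (Fin 2) ℂ := !![0, -Complex.I; Complex.I, 0]

/-- The Pauli matrix `Z`. -/
def PauliZ : Matrix (Fin 2) (Fin 2) ℂ := !![1, 0; 0, -1]

/-- The `n`-fold Kronecker product of the 2×2 matrices `A 0, …, A (n-1)`, realized as a
matrix indexed by `Fin n → Fin 2` (a type of cardinality `2^n`). -/
def pauliString {n : ℕ} (A : Fin n → Matrix (Fin 2) (Fin 2) ℂ) :
    Matrix (Fin n → Fin 2) (Fin n → Fin 2) ℂ :=
  Matrix.of fun x y => ∏ k, A k (x k) (y k)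

/-- The Pauli string `A_i B_j` with `A` at site `i`, `B` at site `j`, and identity elsewhere. -/
def twoLocal {n : ℕ} (A B : Matrix (Fin 2) (Fin 2) ℂ) (i j : Fin n) :
    Matrix (Fin n → Fin 2) (Fin n → Fin 2) ℂ :=
  pauliString (fun k => if k = i then A else if k = j then B else PauliI)

/-- The Pauli string `A_i` with `A` at site `i` and identity elsewhere. -/
def oneLocal {n : ℕ} (A : Matrix (Fin 2) (Fin 2) ℂ) (i : Fin n) :
    Matrix (Fin n → Fin 2) (Fin n → Fin 2) ℂ :=
  pauliString (fun k => if k = i then A else PauliI)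

/-- The generating sets `𝒜_k` (a pair `(a, b)` stands for `a ⊗ b`). -/
def genSet : ℕ → Set (Matrix (Fin 2) (Fin 2) ℂ × Matrix (Fin 2) (Fin 2) ℂ)
  | 2 => {(PauliX, PauliY), (PauliY, PauliX)}
  | 4 => {(PauliX, PauliX), (PauliY, PauliY)}
  | 6 => {(PauliX, PauliX), (PauliY, PauliZ), (PauliZ, PauliY)}
  | 7 => {(PauliX, PauliX), (PauliY, PauliY), (PauliZ, PauliZ)}
  | 14 => {(PauliX, PauliX), (PauliY, PauliY), (PauliX, PauliY), (PauliY, PauliX)}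
  | 16 => {(PauliX, PauliY), (PauliY, PauliX), (PauliY, PauliZ), (PauliZ, PauliY)}
  | 20 => {(PauliX, PauliX), (PauliY, PauliY), (PauliY, PauliZ), (PauliZ, PauliY)}
  | 22 => {(PauliX, PauliX), (PauliX, PauliY), (PauliY, PauliX), (PauliX, PauliZ), (PauliZ, PauliX)}
  | _ => ∅

/-- The dynamical Lie algebra `𝔞_k^G`: the smallest real Lie subalgebra of the `2^n × 2^n`
complex matrices containing `i·(a_i · b_j)` for every edge `{i, j}` of `G` and every pair
`(a, b)` with `a ⊗ b ∈ 𝒜_k`. -/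
def dla (k : ℕ) {n : ℕ} (G : SimpleGraph (Fin n)) :
    LieSubalgebra ℝ (Matrix (Fin n → Fin 2) (Fin n → Fin 2) ℂ) :=
  LieSubalgebra.lieSpan ℝ _
    {M | ∃ i j : Fin n, G.Adj i j ∧ ∃ p ∈ genSet k, M = Complex.I • twoLocal p.1 p.2 i j}

/-- The graph on `{1, …, m}` (realized as `Fin m`, vertex `v` being index `v - 1`) whose edges
are all pairs `{i, j}` with `2 ≤ i < j ≤ m`, together with the single edge `{1, 2}`. -/
def completePlusPendant (m : ℕ) : SimpleGraph (Fin m) :=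
  SimpleGraph.fromRel (fun i j => (1 ≤ (i : ℕ) ∧ 1 ≤ (j : ℕ)) ∨ ((i : ℕ) = 0 ∧ (j : ℕ) = 1))

/-!
If `a – b – c` is a path, a few commutators of the generators on the edges `ab` and `bc` give
every generator on `ac`; for `k = 7`, for instance, `[Y_b Y_c, [Z_b Z_c, X_a X_b]] ∝ X_a X_c`.
So generators spread along walks, and the dynamical Lie algebra of any connected graph is that
of the complete graph. The commutator of two Pauli strings that anticommute at exactly one site
is `±2i` times the Pauli string of their letterwise product, so these derivations can be
carried out on words of Pauli letters.
-/

inductive PauliLetter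
  | I | X | Y | Z
  deriving DecidableEq

namespace PauliLetter

instance : One PauliLetter := ⟨I⟩

/-- The letter of `p.toMatrix * q.toMatrix`, the phase dropped (see `toMatrix_mul_toMatrix`). -/
instance : Mul PauliLetter where
  mul
    | I, p => p
    | p, I => p
    | X, X => I | Y, Y => I | Z, Z => I
    | X, Y => Z | Y, X => Z | Y, Z => X | Z, Y => X | Z, X => Y | X, Z => Y

def toMatrix : PauliLetter → Matrix (Fin 2) (Fin 2) ℂ
  | I => PauliI
  | X => PauliX
  | Y => PauliY
  | Z => PauliZ

def phase : PauliLetter → PauliLetter → ℂ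
  | X, Y => Complex.I | Y, Z => Complex.I | Z, X => Complex.I
  | Y, X => -Complex.I | Z, Y => -Complex.I | X, Z => -Complex.I
  | _, _ => 1

def Anticommute (p q : PauliLetter) : Prop := p ≠ 1 ∧ q ≠ 1 ∧ p ≠ q

instance (p q : PauliLetter) : Decidable (Anticommute p q) :=
  inferInstanceAs (Decidable (_ ∧ _))

theorem toMatrix_mul_toMatrix (p q : PauliLetter) :
    p.toMatrix * q.toMatrix = phase p q • (p * q).toMatrix := by
  cases p <;> cases q <;> ext i j <;> fin_cases i <;> fin_cases j <;>
    simp [toMatrix, phase, PauliI, PauliX, PauliY, PauliZ, Matrix.mul_apply, Fin.sum_univ_two]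

protected theorem mul_comm (p q : PauliLetter) : p * q = q * p := by
  cases p <;> cases q <;> rfl

theorem Anticommute.symm {p q : PauliLetter} (h : Anticommute p q) : Anticommute q p :=
  ⟨h.2.1, h.1, h.2.2.symm⟩

theorem phase_eq_one_of_not_anticommute {p q : PauliLetter} (h : ¬Anticommute p q) :
    phase p q = 1 := by
  cases p <;> cases q <;> first | rfl | exact absurd (by decide) h

theorem phase_swap_of_anticommute {p q : PauliLetter} (h : Anticommute p q) :
    phase q p = -phase p q := by
  cases p <;> cases q <;> first | exact absurd h (by decide) | simp [phase]

theorem phase_eq_I_or_neg_I {p q : PauliLetter} (h : Anticommute p q) :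
    phase p q = Complex.I ∨ phase p q = -Complex.I := by
  cases p <;> cases q <;> first | exact absurd h (by decide) | simp [phase]

end PauliLetter

open PauliLetter

theorem pauliString_mul {n : ℕ} (A B : Fin n → Matrix (Fin 2) (Fin 2) ℂ) :
    pauliString A * pauliString B = pauliString (A * B) := by
  ext x y
  simp only [pauliString, Matrix.mul_apply, Matrix.of_apply, Pi.mul_apply]
  rw [Finset.prod_univ_sum, Fintype.piFinset_univ]
  exact Finset.sum_congr rfl fun z _ => Finset.prod_mul_distrib.symm

theorem pauliString_smul {n : ℕ} (c : Fin n → ℂ) (A : Fin n → Matrix (Fin 2) (Fin 2) ℂ) :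
    pauliString (fun k => c k • A k) = (∏ k, c k) • pauliString A := by
  ext x y
  simp only [pauliString, Matrix.of_apply, Matrix.smul_apply, smul_eq_mul,
    Finset.prod_mul_distrib]

def pauliWord {n : ℕ} (w : Fin n → PauliLetter) :
    Matrix (Fin n → Fin 2) (Fin n → Fin 2) ℂ :=
  pauliString fun k => (w k).toMatrix

theorem pauliWord_mul_pauliWord {n : ℕ} (u v : Fin n → PauliLetter) :
    pauliWord u * pauliWord v = (∏ k, phase (u k) (v k)) • pauliWord (u * v) := by
  rw [pauliWord, pauliWord, pauliString_mul, pauliWord, ← pauliString_smul]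
  exact congrArg pauliString (funext fun k => toMatrix_mul_toMatrix (u k) (v k))

theorem twoLocal_toMatrix {n : ℕ} (x y : PauliLetter) (i j : Fin n) :
    twoLocal x.toMatrix y.toMatrix i j =
      pauliWord fun k => if k = i then x else if k = j then y else 1 := by
  refine congrArg pauliString (funext fun k => ?_)
  dsimp only
  split_ifs <;> rfl

def AnticommuteAtOneSite {ι : Type*} (u v : ι → PauliLetter) : Prop :=
  ∃ s, Anticommute (u s) (v s) ∧ ∀ k ≠ s, ¬Anticommute (u k) (v k)

instance {ι : Type*} [Fintype ι] [DecidableEq ι] (u v : ι → PauliLetter) :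
    Decidable (AnticommuteAtOneSite u v) := by
  unfold AnticommuteAtOneSite
  infer_instance

theorem lie_pauliWord_of_anticommute {n : ℕ} {u v : Fin n → PauliLetter} {s : Fin n}
    (hs : Anticommute (u s) (v s)) (hk : ∀ k ≠ s, ¬Anticommute (u k) (v k)) :
    ⁅pauliWord u, pauliWord v⁆ = (2 * phase (u s) (v s)) • pauliWord (u * v) := by
  have prod_phase {p q : Fin n → PauliLetter} (h : ∀ k ≠ s, ¬Anticommute (p k) (q k)) :
      ∏ k, phase (p k) (q k) = phase (p s) (q s) :=
    Finset.prod_eq_single s (fun k _ hks => phase_eq_one_of_not_anticommute (h k hks))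
      (by simp)
  rw [Ring.lie_def, pauliWord_mul_pauliWord, pauliWord_mul_pauliWord, prod_phase hk,
    prod_phase fun k hks h => hk k hks h.symm, phase_swap_of_anticommute hs,
    show v * u = u * v from funext fun k => PauliLetter.mul_comm _ _, ← sub_smul]
  congr 1
  ring

theorem I_smul_pauliWord_mul_mem {n : ℕ}
    {S : LieSubalgebra ℝ (Matrix (Fin n → Fin 2) (Fin n → Fin 2) ℂ)}
    {u v : Fin n → PauliLetter} (huv : AnticommuteAtOneSite u v)
    (hu : Complex.I • pauliWord u ∈ S) (hv : Complex.I • pauliWord v ∈ S) :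
    Complex.I • pauliWord (u * v) ∈ S := by
  obtain ⟨s, hs, hk⟩ := huv
  have hlie := S.lie_mem hu hv
  rw [smul_lie, lie_smul, lie_pauliWord_of_anticommute hs hk, smul_smul, smul_smul] at hlie
  obtain ⟨r, hr⟩ :
      ∃ r : ℝ, Complex.I = r * (Complex.I * Complex.I * (2 * phase (u s) (v s))) := by
    rcases phase_eq_I_or_neg_I hs with h | h <;> rw [h]
    · exact ⟨-1/2, by push_cast; ring_nf; simp⟩
    · exact ⟨1/2, by push_cast; ring_nf; simp⟩
  rw [hr, ← smul_smul, Complex.coe_smul]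
  exact S.smul_mem r hlie

section Extend

variable {ι κ : Type*} {e : ι → κ}

theorem extend_mul_extend (u v : ι → PauliLetter) :
    Function.extend e (u * v) 1 = Function.extend e u 1 * Function.extend e v 1 := by
  rw [← Function.extend_mul]
  rfl

theorem AnticommuteAtOneSite.extend (he : e.Injective) {u v : ι → PauliLetter}
    (h : AnticommuteAtOneSite u v) :
    AnticommuteAtOneSite (Function.extend e u 1) (Function.extend e v 1) := by
  obtain ⟨s, hs, hk⟩ := h
  refine ⟨e s, by simpa only [he.extend_apply] using hs, fun k hks => ?_⟩
  by_cases hk' : ∃ t, e t = k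
  · obtain ⟨t, rfl⟩ := hk'
    simpa only [he.extend_apply] using hk t (fun h => hks (h ▸ rfl))
  · simp [Function.extend_apply' _ _ _ hk', Anticommute]

end Extend

section ThreeSites

variable {α : Type*} {a b c : α}

theorem injective_vecCons_three (hab : a ≠ b) (hac : a ≠ c) (hbc : b ≠ c) :
    Function.Injective ![a, b, c] := by
  intro s t h
  fin_cases s <;> fin_cases t <;> simp_all [eq_comm]

theorem extend_vecCons_three {β : Type*} [One β] [DecidableEq α] (hab : a ≠ b) (hac : a ≠ c)
    (hbc : b ≠ c) (w : Fin 3 → β) :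
    Function.extend ![a, b, c] w 1 =
      fun k => if k = a then w 0 else if k = b then w 1 else if k = c then w 2 else 1 := by
  have he := injective_vecCons_three hab hac hbc
  funext k
  split_ifs with h1 h2 h3
  · subst h1; exact he.extend_apply w 1 0
  · subst h2; exact he.extend_apply w 1 1
  · subst h3; exact he.extend_apply w 1 2
  · refine Function.extend_apply' _ _ _ ?_
    rintro ⟨t, rfl⟩
    fin_cases t <;> simp_all

end ThreeSites

def edgeGenerators (T : Set (Matrix (Fin 2) (Fin 2) ℂ × Matrix (Fin 2) (Fin 2) ℂ)) {n : ℕ}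
    (i j : Fin n) : Set (Matrix (Fin n → Fin 2) (Fin n → Fin 2) ℂ) :=
  (fun p => Complex.I • twoLocal p.1 p.2 i j) '' T

def PathTransitive (T : Set (Matrix (Fin 2) (Fin 2) ℂ × Matrix (Fin 2) (Fin 2) ℂ)) : Prop :=
  ∀ ⦃n : ℕ⦄ (S : LieSubalgebra ℝ (Matrix (Fin n → Fin 2) (Fin n → Fin 2) ℂ))
    ⦃a b c : Fin n⦄, a ≠ b → a ≠ c → b ≠ c →
    edgeGenerators T a b ⊆ S → edgeGenerators T b c ⊆ S → edgeGenerators T a c ⊆ S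

/-- Words on the three sites of a path `a – b – c` that are reached from the letter pairs `L`
on the edges `ab` (`left`) and `bc` (`right`) by commutators. -/
inductive PathDerivable (L : Finset (PauliLetter × PauliLetter)) : (Fin 3 → PauliLetter) → Prop
  | left (p : PauliLetter × PauliLetter) (hp : p ∈ L := by decide) :
      PathDerivable L ![p.1, p.2, 1]
  | right (p : PauliLetter × PauliLetter) (hp : p ∈ L := by decide) :
      PathDerivable L ![1, p.1, p.2]
  | mul {u v : Fin 3 → PauliLetter} :
      PathDerivable L u → PathDerivable L v → AnticommuteAtOneSite u v →
        PathDerivable L (u * v)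

namespace PathDerivable

variable {L : Finset (PauliLetter × PauliLetter)}

theorem of_mul {u v w : Fin 3 → PauliLetter} (hu : PathDerivable L u) (hv : PathDerivable L v)
    (huv : AnticommuteAtOneSite u v := by decide) (hw : u * v = w := by decide) :
    PathDerivable L w :=
  hw ▸ hu.mul hv huv

theorem I_smul_pauliWord_mem {n : ℕ} {a b c : Fin n}
    {S : LieSubalgebra ℝ (Matrix (Fin n → Fin 2) (Fin n → Fin 2) ℂ)}
    (hab : a ≠ b) (hac : a ≠ c) (hbc : b ≠ c)
    (h_ab : edgeGenerators (Prod.map toMatrix toMatrix '' L) a b ⊆ S)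
    (h_bc : edgeGenerators (Prod.map toMatrix toMatrix '' L) b c ⊆ S)
    {w : Fin 3 → PauliLetter} (hw : PathDerivable L w) :
    Complex.I • pauliWord (Function.extend ![a, b, c] w 1) ∈ S := by
  induction hw with
  | left p hp =>
    have h := h_ab ⟨_, ⟨p, hp, rfl⟩, rfl⟩
    simp only [Prod.map_fst, Prod.map_snd, twoLocal_toMatrix, SetLike.mem_coe] at h
    convert h using 4 with k
    rw [extend_vecCons_three hab hac hbc]
    simp
  | right p hp =>
    have h := h_bc ⟨_, ⟨p, hp, rfl⟩, rfl⟩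
    simp only [Prod.map_fst, Prod.map_snd, twoLocal_toMatrix, SetLike.mem_coe] at h
    convert h using 4 with k
    rw [extend_vecCons_three hab hac hbc]
    rcases eq_or_ne k a with rfl | hka
    · simp [hab, hac]
    · simp [hka]
  | mul _ _ huv ihu ihv =>
    rw [extend_mul_extend]
    exact I_smul_pauliWord_mul_mem (huv.extend (injective_vecCons_three hab hac hbc)) ihu ihv

end PathDerivable

theorem pathTransitive_of_pathDerivable {L : Finset (PauliLetter × PauliLetter)}
    (h : ∀ p ∈ L, PathDerivable L ![p.1, 1, p.2]) :
    PathTransitive (Prod.map toMatrix toMatrix '' L) := by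
  intro n S a b c hab hac hbc h_ab h_bc
  rintro _ ⟨_, ⟨p, hp, rfl⟩, rfl⟩
  have hmem := (h p hp).I_smul_pauliWord_mem hab hac hbc h_ab h_bc
  simp only [Prod.map_fst, Prod.map_snd, twoLocal_toMatrix, SetLike.mem_coe]
  convert hmem using 4 with k
  rw [extend_vecCons_three hab hac hbc]
  rcases eq_or_ne k b with rfl | hkb
  · simp [hab.symm, hbc]
  · simp [hkb]

theorem pathTransitive_genSet_seven : PathTransitive (genSet 7) := by
  let L : Finset (PauliLetter × PauliLetter) := {(X, X), (Y, Y), (Z, Z)}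
  have hL : genSet 7 = Prod.map toMatrix toMatrix '' L := by
    simp [L, genSet, Set.image_insert_eq, toMatrix]
  have XYZ : PathDerivable L ![X, Y, Z] := .of_mul (.right (Z, Z)) (.left (X, X))
  have YXZ : PathDerivable L ![Y, X, Z] := .of_mul (.right (Z, Z)) (.left (Y, Y))
  have ZXY : PathDerivable L ![Z, X, Y] := .of_mul (.right (Y, Y)) (.left (Z, Z))
  rw [hL]
  refine pathTransitive_of_pathDerivable ?_
  simp only [L, Finset.mem_insert, Finset.mem_singleton, forall_eq_or_imp, forall_eq]
  exact ⟨.of_mul (.right (Y, Y)) XYZ, .of_mul (.right (X, X)) YXZ, .of_mul (.right (X, X)) ZXY⟩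

theorem pathTransitive_genSet_sixteen : PathTransitive (genSet 16) := by
  let L : Finset (PauliLetter × PauliLetter) := {(X, Y), (Y, X), (Y, Z), (Z, Y)}
  have hL : genSet 16 = Prod.map toMatrix toMatrix '' L := by
    simp [L, genSet, Set.image_insert_eq, toMatrix]
  have ZXY : PathDerivable L ![Z, X, Y] := .of_mul (.right (Z, Y)) (.left (Z, Y))
  have YXZ : PathDerivable L ![Y, X, Z] := .of_mul (.right (Y, Z)) (.left (Y, Z))
  have YXX : PathDerivable L ![Y, X, X] := .of_mul (.right (Y, X)) (.left (Y, Z))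
  have XXY : PathDerivable L ![X, X, Y] := .of_mul (.right (Z, Y)) (.left (X, Y))
  rw [hL]
  refine pathTransitive_of_pathDerivable ?_
  simp only [L, Finset.mem_insert, Finset.mem_singleton, forall_eq_or_imp, forall_eq]
  exact ⟨.of_mul (.left (Y, X)) ZXY, .of_mul (.right (X, Y)) YXZ, .of_mul (.right (X, Y)) YXX,
    .of_mul (.left (Y, X)) XXY⟩

theorem pathTransitive_genSet_twenty : PathTransitive (genSet 20) := by
  let L : Finset (PauliLetter × PauliLetter) := {(X, X), (Y, Y), (Y, Z), (Z, Y)}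
  have hL : genSet 20 = Prod.map toMatrix toMatrix '' L := by
    simp [L, genSet, Set.image_insert_eq, toMatrix]
  have XYY : PathDerivable L ![X, Y, Y] := .of_mul (.right (Z, Y)) (.left (X, X))
  have YXZ : PathDerivable L ![Y, X, Z] := .of_mul (.right (Y, Z)) (.left (Y, Z))
  have YXY : PathDerivable L ![Y, X, Y] := .of_mul (.right (Y, Y)) (.left (Y, Z))
  rw [hL]
  refine pathTransitive_of_pathDerivable ?_
  simp only [L, Finset.mem_insert, Finset.mem_singleton, forall_eq_or_imp, forall_eq]
  exact ⟨.of_mul (.right (Y, Z)) XYY, .of_mul (.right (X, X)) YXZ, .of_mul (.right (X, X)) YXY,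
    .of_mul (.left (X, X)) YXY⟩

theorem pathTransitive_genSet_twentyTwo : PathTransitive (genSet 22) := by
  let L : Finset (PauliLetter × PauliLetter) := {(X, X), (X, Y), (Y, X), (X, Z), (Z, X)}
  have hL : genSet 22 = Prod.map toMatrix toMatrix '' L := by
    simp [L, genSet, Set.image_insert_eq, toMatrix]
  have IIY : PathDerivable L ![I, I, Y] := .of_mul (.right (X, X)) (.right (X, Z))
  have XXX : PathDerivable L ![X, X, X] := .of_mul (.right (Y, X)) (.left (X, Z))
  have XIZ : PathDerivable L ![X, I, Z] := .of_mul (.right (X, Y)) XXX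
  rw [hL]
  refine pathTransitive_of_pathDerivable ?_
  simp only [L, Finset.mem_insert, Finset.mem_singleton, forall_eq_or_imp, forall_eq]
  exact ⟨.of_mul IIY XIZ, .of_mul (.right (X, Z)) XXX, .of_mul XXX (.left (Z, X)), XIZ,
    .of_mul XXX (.left (Y, X))⟩

section Graph

variable {k n : ℕ} {G : SimpleGraph (Fin n)}

theorem dla_mono {H : SimpleGraph (Fin n)} (h : G ≤ H) : dla k G ≤ dla k H :=
  LieSubalgebra.lieSpan_mono fun _ ⟨i, j, hij, hM⟩ => ⟨i, j, h hij, hM⟩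

theorem edgeGenerators_subset_dla {i j : Fin n} (h : G.Adj i j) :
    edgeGenerators (genSet k) i j ⊆ dla k G := by
  rintro _ ⟨p, hp, rfl⟩
  exact LieSubalgebra.subset_lieSpan ⟨i, j, h, p, hp, rfl⟩

theorem edgeGenerators_subset_dla_of_reachable (htrans : PathTransitive (genSet k))
    {i j : Fin n} (hij : i ≠ j) (h : G.Reachable i j) :
    edgeGenerators (genSet k) i j ⊆ dla k G := by
  obtain ⟨walk⟩ := h
  refine (?_ : i = j ∨ edgeGenerators (genSet k) i j ⊆ dla k G).resolve_left hij
  clear hij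
  induction walk with
  | nil => exact .inl rfl
  | @cons u v j huv _ ih =>
    by_cases huj : u = j
    · exact .inl huj
    by_cases hvj : v = j
    · subst hvj
      exact .inr (edgeGenerators_subset_dla huv)
    exact .inr (htrans _ huv.ne huj hvj (edgeGenerators_subset_dla huv) (ih.resolve_left hvj))

theorem dla_eq_top_of_preconnected (htrans : PathTransitive (genSet k)) (hG : G.Preconnected) :
    dla k G = dla k ⊤ := by
  refine le_antisymm (dla_mono le_top) (LieSubalgebra.lieSpan_le.mpr ?_)
  rintro _ ⟨i, j, hij, p, hp, rfl⟩
  exact edgeGenerators_subset_dla_of_reachable htrans hij (hG i j) ⟨p, hp, rfl⟩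

end Graph

theorem completePlusPendant_preconnected (m : ℕ) : (completePlusPendant m).Preconnected := by
  have reachable_of_pos {i j : Fin m} (hi : 1 ≤ (i : ℕ)) (hj : 1 ≤ (j : ℕ)) :
      (completePlusPendant m).Reachable i j := by
    by_cases hij : i = j
    · exact hij ▸ .refl i
    · exact SimpleGraph.Adj.reachable
        ((SimpleGraph.fromRel_adj _ _ _).mpr ⟨hij, .inl (.inl ⟨hi, hj⟩)⟩)
  have reachable_of_zero {i j : Fin m} (hi : (i : ℕ) = 0) (hj : 1 ≤ (j : ℕ)) :
      (completePlusPendant m).Reachable i j := by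
    let one : Fin m := ⟨1, by omega⟩
    have hadj : (completePlusPendant m).Adj i one :=
      (SimpleGraph.fromRel_adj _ _ _).mpr
        ⟨fun h => by simp [h, one] at hi, .inl (.inr ⟨hi, rfl⟩)⟩
    exact hadj.reachable.trans (reachable_of_pos le_rfl hj)
  intro i j
  rcases Nat.eq_zero_or_pos i with hi | hi <;> rcases Nat.eq_zero_or_pos j with hj | hj
  · exact Fin.ext (hi.trans hj.symm) ▸ .refl i
  · exact reachable_of_zero hi hj
  · exact (reachable_of_zero hj hi).symm
  · exact reachable_of_pos hi hj

theorem dla_completePlusPendant_eq_completeGraph_general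
    (m : ℕ) (k : ℕ) (hk : k ∈ ({7, 16, 20, 22} : Set ℕ)) :
    dla k (completePlusPendant m) = dla k (⊤ : SimpleGraph (Fin m)) := by
  have htrans : PathTransitive (genSet k) := by
    rcases hk with rfl | rfl | rfl | rfl
    exacts [pathTransitive_genSet_seven, pathTransitive_genSet_sixteen,
      pathTransitive_genSet_twenty, pathTransitive_genSet_twentyTwo]
  exact dla_eq_top_of_preconnected htrans (completePlusPendant_preconnected m)

/-- For `k ∈ {7, 16, 20, 22}` and `m ≥ 2`, the complete graph on
`{2, …, m}` together with the extra edge `{1, 2}` is `k`-equivalent to `K_m`. -/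
theorem dla_completePlusPendant_eq_completeGraph
    (m : ℕ) (hm : 2 ≤ m) (k : ℕ) (hk : k ∈ ({7, 16, 20, 22} : Set ℕ)) :
    dla k (completePlusPendant m) = dla k (⊤ : SimpleGraph (Fin m)) :=
  dla_completePlusPendant_eq_completeGraph_general m k hk
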